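/- arXiv:1808.10483 — 2 statements merged into one kernel-verified Lean document; each statement's English description precedes it below -/
import Mathlib

section
/- (Scheffé) If φ : Ω → [0,1] is a permutation test at significance level α (i.e., (1/n!) Σ_{π∈S_n} φ(πx) = α a.e.) and g_0 is an exchangeable probability density on the S_n-symmetric measurable set Ω, then ∫_Ω g_0 φ dμ = α; that is, the permutation test is exact. -/
/-!
Each permutation preserves Lebesgue measure, the set `Ω` and the density `g₀`, so
`∫_Ω g₀ · (φ ∘ π) = ∫_Ω g₀ · φ` for every `π`. Averaging over the `n!` permutations and using
that the average of `φ ∘ π` is `α` almost everywhere gives `∫_Ω g₀ · φ = α · ∫_Ω g₀ = α`.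
-/

open MeasureTheory

/-- The action of a permutation `π` on vectors: `(π • x) k = x (π k)`. -/
def permAct {n : ℕ} (π : Equiv.Perm (Fin n)) (x : Fin n → ℝ) : Fin n → ℝ := x ∘ π

section Averaging

variable {α E : Type*} [MeasurableSpace α] {μ : Measure α}
  [NormedAddCommGroup E] [NormedSpace ℝ E]

theorem MeasureTheory.MeasurePreserving.setIntegral_comp_of_preimage_eq {T : α → α}
    (hT : MeasurePreserving T μ μ) (hTe : MeasurableEmbedding T) {s : Set α}
    (hs : T ⁻¹' s = s) (f : α → E) :
    ∫ x in s, f (T x) ∂μ = ∫ x in s, f x ∂μ := by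
  simpa only [hs] using hT.setIntegral_preimage_emb hTe f s

theorem integral_mul_eq_of_average_eq {ι : Type*} [Fintype ι] [Nonempty ι]
    {g f : α → ℝ} {T : ι → α → α} {c : ℝ}
    (hint : ∀ i, Integrable (fun x => g x * f (T i x)) μ)
    (hinv : ∀ i, ∫ x, g x * f (T i x) ∂μ = ∫ x, g x * f x ∂μ)
    (havg : ∀ᵐ x ∂μ, (1 / (Fintype.card ι : ℝ)) * ∑ i, f (T i x) = c) :
    ∫ x, g x * f x ∂μ = c * ∫ x, g x ∂μ := by
  have hcard : (Fintype.card ι : ℝ) ≠ 0 := Nat.cast_ne_zero.mpr Fintype.card_ne_zero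
  have hsum : ∀ᵐ x ∂μ, ∑ i, g x * f (T i x) = g x * (Fintype.card ι * c) := by
    filter_upwards [havg] with x hx
    rw [← Finset.mul_sum, ← hx]
    field_simp
  apply mul_left_cancel₀ hcard
  calc (Fintype.card ι : ℝ) * ∫ x, g x * f x ∂μ
      = ∑ i, ∫ x, g x * f (T i x) ∂μ := by simp [hinv]
    _ = ∫ x, ∑ i, g x * f (T i x) ∂μ := (integral_finsetSum _ fun i _ => hint i).symm
    _ = ∫ x, g x * (Fintype.card ι * c) ∂μ := integral_congr_ae hsum
    _ = Fintype.card ι * (c * ∫ x, g x ∂μ) := by rw [integral_mul_const]; ring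

end Averaging

section PermAct

variable {n : ℕ}

theorem permAct_eq_piCongrLeft (π : Equiv.Perm (Fin n)) :
    permAct π = MeasurableEquiv.piCongrLeft (fun _ : Fin n => ℝ) π.symm := by
  funext x i
  simp [permAct, MeasurableEquiv.piCongrLeft, Equiv.piCongrLeft_apply]

theorem measurePreserving_permAct (π : Equiv.Perm (Fin n)) :
    MeasurePreserving (permAct π) volume volume := by
  rw [permAct_eq_piCongrLeft]
  exact volume_measurePreserving_piCongrLeft _ _

theorem measurableEmbedding_permAct (π : Equiv.Perm (Fin n)) :
    MeasurableEmbedding (permAct π) := by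
  rw [permAct_eq_piCongrLeft]
  exact MeasurableEquiv.measurableEmbedding _

@[simp]
theorem permAct_inv_permAct (π : Equiv.Perm (Fin n)) (x : Fin n → ℝ) :
    permAct π⁻¹ (permAct π x) = x := by
  funext i
  simp [permAct]

theorem preimage_permAct_eq {Ω : Set (Fin n → ℝ)}
    (hΩ : ∀ (π : Equiv.Perm (Fin n)) (x : Fin n → ℝ), x ∈ Ω → permAct π x ∈ Ω)
    (π : Equiv.Perm (Fin n)) :
    permAct π ⁻¹' Ω = Ω := by
  ext x
  refine ⟨fun hx => ?_, hΩ π x⟩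
  simpa using hΩ π⁻¹ _ hx

end PermAct

theorem stmt_6_general {n : ℕ} (Ω : Set (Fin n → ℝ))
    (hΩsym : ∀ (π : Equiv.Perm (Fin n)) (x : Fin n → ℝ), x ∈ Ω → permAct π x ∈ Ω)
    (g₀ : (Fin n → ℝ) → ℝ)
    (hg₀int : IntegrableOn g₀ Ω volume)
    (hdens : ∫ x in Ω, g₀ x = 1)
    (hexch : ∀ (π : Equiv.Perm (Fin n)) (x : Fin n → ℝ), g₀ (permAct π x) = g₀ x)
    (α : ℝ) (φ : (Fin n → ℝ) → ℝ) (hφmeas : Measurable φ)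
    (hφ01 : ∀ x, φ x ∈ Set.Icc (0 : ℝ) 1)
    (hperm : ∀ᵐ x ∂(volume.restrict Ω),
      (1 / (n.factorial : ℝ)) * ∑ π : Equiv.Perm (Fin n), φ (permAct π x) = α) :
    ∫ x in Ω, g₀ x * φ x = α := by
  have hφbound : ∀ x, ‖φ x‖ ≤ 1 := fun x => by
    rw [Real.norm_eq_abs, abs_of_nonneg (hφ01 x).1]
    exact (hφ01 x).2
  have hint : ∀ π : Equiv.Perm (Fin n),
      Integrable (fun x => g₀ x * φ (permAct π x)) (volume.restrict Ω) := fun π =>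
    hg₀int.mul_bdd (hφmeas.comp (measurableEmbedding_permAct π).measurable).aestronglyMeasurable
      (ae_of_all _ fun x => hφbound (permAct π x))
  have hinv : ∀ π : Equiv.Perm (Fin n),
      ∫ x in Ω, g₀ x * φ (permAct π x) = ∫ x in Ω, g₀ x * φ x := fun π => by
    simpa only [hexch] using (measurePreserving_permAct π).setIntegral_comp_of_preimage_eq
      (measurableEmbedding_permAct π) (preimage_permAct_eq hΩsym π) fun x => g₀ x * φ x
  rw [integral_mul_eq_of_average_eq hint hinv (by simpa [Fintype.card_perm] using hperm),
    hdens, mul_one]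

/-- (Scheffé) A permutation test is exact on exchangeable probability densities. -/
theorem stmt_6 {n : ℕ} (Ω : Set (Fin n → ℝ)) (hΩmeas : MeasurableSet Ω)
    (hΩsym : ∀ (π : Equiv.Perm (Fin n)) (x : Fin n → ℝ), x ∈ Ω → permAct π x ∈ Ω)
    (g₀ : (Fin n → ℝ) → ℝ) (hg₀meas : Measurable g₀)
    (hg₀pos : ∀ x, 0 ≤ g₀ x)
    (hg₀int : IntegrableOn g₀ Ω volume)
    (hdens : ∫ x in Ω, g₀ x = 1)
    (hexch : ∀ (π : Equiv.Perm (Fin n)) (x : Fin n → ℝ), g₀ (permAct π x) = g₀ x)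
    (α : ℝ) (φ : (Fin n → ℝ) → ℝ) (hφmeas : Measurable φ)
    (hφ01 : ∀ x, φ x ∈ Set.Icc (0 : ℝ) 1)
    (hperm : ∀ᵐ x ∂(volume.restrict Ω),
      (1 / (n.factorial : ℝ)) * ∑ π : Equiv.Perm (Fin n), φ (permAct π x) = α) :
    ∫ x in Ω, g₀ x * φ x = α :=
  stmt_6_general Ω hΩsym g₀ hg₀int hdens hexch α φ hφmeas hφ01 hperm
end

section
/- Let Ω be S_n-symmetric and measurable, g_0 : Ω → ℝ nonnegative measurable with h(x) = (1/n!) Σ_{π∈S_n} g_0(πx) non-zero a.e., and let φ : Ω → [0,1] satisfy (1/n!) Σ_{π∈S_n} (g_0(πx)/h(x)) φ(πx) = α a.e. Then ∫_Ω g_0 φ dμ = α · n! · ∫_{Ω∩T} h dμ. -/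
open MeasureTheory

/-- The open chamber of strictly increasing vectors. -/
def ascSet (n : ℕ) : Set (Fin n → ℝ) := {x | StrictMono x}

/-- The symmetrization of `g₀`. -/
noncomputable def symmetrize {n : ℕ} (g₀ : (Fin n → ℝ) → ℝ) (x : Fin n → ℝ) : ℝ :=
  (1 / (n.factorial : ℝ)) * ∑ π : Equiv.Perm (Fin n), g₀ (permAct π x)

/-!
Since Lebesgue measure and `Ω` are invariant under permutations, integrating over `Ω` commutes
with symmetrization, so `∫_Ω g₀ φ = ∫_Ω sym(g₀ φ)`; the level-`α` condition says exactly that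
`sym(g₀ φ) = α h` almost everywhere on `Ω`. Finally, up to the null set of vectors with a repeated
coordinate, `Ω` is the disjoint union of the `n!` chambers `Ω ∩ σ⁻¹ T`, and the change of
variables `x ↦ x ∘ σ` carries the integral of the invariant function `h` over each of them to
its integral over `Ω ∩ T`.
-/

section PermAct

variable {n : ℕ}

theorem coe_piCongrLeft_symm_eq_permAct (π : Equiv.Perm (Fin n)) :
    ⇑(MeasurableEquiv.piCongrLeft (fun _ : Fin n => ℝ) π.symm) = permAct π := by
  funext x k
  simp [MeasurableEquiv.coe_piCongrLeft, Equiv.piCongrLeft_apply, eq_rec_constant, permAct]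

theorem permAct_permAct (π σ : Equiv.Perm (Fin n)) (x : Fin n → ℝ) :
    permAct π (permAct σ x) = permAct (σ * π) x := rfl

variable {Ω : Set (Fin n → ℝ)} (hΩ : ∀ (π : Equiv.Perm (Fin n)) x, x ∈ Ω → permAct π x ∈ Ω)
include hΩ

theorem preimage_permAct_eq_self (π : Equiv.Perm (Fin n)) : permAct π ⁻¹' Ω = Ω := by
  refine Set.Subset.antisymm (fun x hx => ?_) (fun x => hΩ π x)
  have := hΩ π⁻¹ _ hx
  rwa [permAct_permAct, mul_inv_cancel] at this

theorem measurePreserving_permAct_restrict (π : Equiv.Perm (Fin n)) :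
    MeasurePreserving (permAct π) (volume.restrict Ω) (volume.restrict Ω) := by
  simpa only [preimage_permAct_eq_self hΩ π] using
    (measurePreserving_permAct π).restrict_preimage_emb (measurableEmbedding_permAct π) Ω

theorem integrableOn_comp_permAct {E : Type*} [NormedAddCommGroup E]
    {f : (Fin n → ℝ) → E} (hf : IntegrableOn f Ω) (π : Equiv.Perm (Fin n)) :
    IntegrableOn (fun x => f (permAct π x)) Ω :=
  ((measurePreserving_permAct_restrict hΩ π).integrable_comp_emb
    (measurableEmbedding_permAct π)).mpr hf

theorem setIntegral_comp_permAct {E : Type*} [NormedAddCommGroup E] [NormedSpace ℝ E]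
    (f : (Fin n → ℝ) → E) (π : Equiv.Perm (Fin n)) :
    ∫ x in Ω, f (permAct π x) = ∫ x in Ω, f x := by
  simpa [preimage_permAct_eq_self hΩ π] using
    (measurePreserving_permAct π).setIntegral_preimage_emb (measurableEmbedding_permAct π) f Ω

end PermAct

section Symmetrize

variable {n : ℕ}

theorem symmetrize_permAct (g : (Fin n → ℝ) → ℝ) (σ : Equiv.Perm (Fin n)) (x : Fin n → ℝ) :
    symmetrize g (permAct σ x) = symmetrize g x := by
  unfold symmetrize
  congr 1
  exact Equiv.sum_comp (Equiv.mulLeft σ) fun π => g (permAct π x)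

theorem symmetrize_mul_eq_mul_symmetrize {g φ : (Fin n → ℝ) → ℝ} {α : ℝ} {x : Fin n → ℝ}
    (hx : symmetrize g x ≠ 0)
    (hφx : (1 / (n.factorial : ℝ)) *
      ∑ π : Equiv.Perm (Fin n), (g (permAct π x) / symmetrize g x) * φ (permAct π x) = α) :
    symmetrize (fun y => g y * φ y) x = α * symmetrize g x := by
  rw [← hφx, mul_assoc, Finset.sum_mul, symmetrize]
  congr 1
  refine Finset.sum_congr rfl fun π _ => ?_
  field_simp

variable {Ω : Set (Fin n → ℝ)} (hΩ : ∀ (π : Equiv.Perm (Fin n)) x, x ∈ Ω → permAct π x ∈ Ω)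
include hΩ

theorem integrableOn_symmetrize {g : (Fin n → ℝ) → ℝ} (hg : IntegrableOn g Ω) :
    IntegrableOn (symmetrize g) Ω :=
  (integrable_finsetSum _ fun π _ => integrableOn_comp_permAct hΩ hg π).const_mul _

theorem setIntegral_symmetrize {g : (Fin n → ℝ) → ℝ} (hg : IntegrableOn g Ω) :
    ∫ x in Ω, symmetrize g x = ∫ x in Ω, g x := by
  unfold symmetrize
  rw [integral_const_mul, integral_finsetSum _ fun π _ => integrableOn_comp_permAct hΩ hg π]
  simp only [setIntegral_comp_permAct hΩ, Finset.sum_const, Finset.card_univ, Fintype.card_perm,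
    Fintype.card_fin, nsmul_eq_mul]
  field_simp

end Symmetrize

section Chambers

variable {n : ℕ}

theorem measurableSet_ascSet (n : ℕ) : MeasurableSet (ascSet n) := by
  have : ascSet n = ⋂ (i : Fin n) (j : Fin n) (_ : i < j), {x : Fin n → ℝ | x i < x j} := by
    ext x
    simp [ascSet, StrictMono]
  rw [this]
  exact .iInter fun i => .iInter fun j => .iInter fun _ =>
    measurableSet_lt (measurable_pi_apply i) (measurable_pi_apply j)

theorem volume_setOf_apply_eq_apply {i j : Fin n} (hij : i ≠ j) :
    volume {x : Fin n → ℝ | x i = x j} = 0 := by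
  let L : (Fin n → ℝ) →ₗ[ℝ] ℝ := (LinearMap.proj i : (Fin n → ℝ) →ₗ[ℝ] ℝ) - LinearMap.proj j
  have hker : {x : Fin n → ℝ | x i = x j} = LinearMap.ker L := by
    ext x
    simp [L, sub_eq_zero]
  rw [hker]
  refine Measure.addHaar_submodule volume _ fun htop => ?_
  have : L (Pi.single i 1) = 0 := LinearMap.mem_ker.1 (htop ▸ Submodule.mem_top)
  simp [L, Pi.single_eq_of_ne (Ne.symm hij)] at this

theorem ae_injective (n : ℕ) : ∀ᵐ x : Fin n → ℝ, Function.Injective x := by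
  refine ae_iff.2 (measure_mono_null (t := ⋃ (i : Fin n) (j : Fin n) (_ : i ≠ j),
    {x : Fin n → ℝ | x i = x j}) (fun x hx => ?_) (measure_iUnion_null fun i =>
      measure_iUnion_null fun j => measure_iUnion_null fun hij => volume_setOf_apply_eq_apply hij))
  simp only [Set.mem_ofPred_eq, Function.Injective, not_forall] at hx
  obtain ⟨i, j, hij, hne⟩ := hx
  simpa using ⟨i, j, hne, hij⟩

theorem perm_eq_sort_of_strictMono {α : Type*} [LinearOrder α] {x : Fin n → α}
    {σ : Equiv.Perm (Fin n)} (h : StrictMono (x ∘ σ)) : σ = Tuple.sort x :=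
  Tuple.eq_sort_iff.2 ⟨h.monotone, fun _ _ hij heq => absurd heq (h hij).ne⟩

theorem strictMono_comp_sort {α : Type*} [LinearOrder α] {x : Fin n → α}
    (hx : Function.Injective x) : StrictMono (x ∘ Tuple.sort x) :=
  (Tuple.monotone_sort x).strictMono_of_injective (hx.comp (Tuple.sort x).injective)

theorem setIntegral_eq_factorial_smul_setIntegral_inter_ascSet {E : Type*}
    [NormedAddCommGroup E] [NormedSpace ℝ E] {Ω : Set (Fin n → ℝ)}
    (hΩ : ∀ (π : Equiv.Perm (Fin n)) x, x ∈ Ω → permAct π x ∈ Ω) {f : (Fin n → ℝ) → E}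
    (hf : IntegrableOn f Ω) (hinv : ∀ π x, f (permAct π x) = f x) :
    ∫ x in Ω, f x = (n.factorial : ℝ) • ∫ x in Ω ∩ ascSet n, f x := by
  set C : Equiv.Perm (Fin n) → Set (Fin n → ℝ) := fun σ => permAct σ ⁻¹' ascSet n
  have hC : ∀ σ, MeasurableSet (C σ) := fun σ =>
    (measurePreserving_permAct σ).measurable (measurableSet_ascSet n)
  have hdisj : Pairwise (Function.onFun Disjoint C) := fun σ τ hστ =>
    Set.disjoint_left.2 fun _ hσ hτ =>
      hστ ((perm_eq_sort_of_strictMono hσ).trans (perm_eq_sort_of_strictMono hτ).symm)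
  have hcover : (⋃ σ, C σ) =ᵐ[volume.restrict Ω] (Set.univ : Set (Fin n → ℝ)) := by
    rw [Filter.eventuallyEq_univ]
    filter_upwards [ae_restrict_of_ae (ae_injective n)] with x hx
    exact Set.mem_iUnion.2 ⟨Tuple.sort x, strictMono_comp_sort hx⟩
  have hchamber : ∀ σ, ∫ x in C σ, f x ∂(volume.restrict Ω) = ∫ x in Ω ∩ ascSet n, f x := by
    intro σ
    calc ∫ x in C σ, f x ∂(volume.restrict Ω)
        = ∫ x in permAct σ ⁻¹' (Ω ∩ ascSet n), f (permAct σ x) := by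
          rw [Measure.restrict_restrict (hC σ), Set.preimage_inter,
            preimage_permAct_eq_self hΩ, Set.inter_comm]
          simp only [hinv, C]
      _ = ∫ x in Ω ∩ ascSet n, f x :=
          (measurePreserving_permAct σ).setIntegral_preimage_emb
            (measurableEmbedding_permAct σ) f _
  calc ∫ x in Ω, f x = ∫ x in ⋃ σ, C σ, f x ∂(volume.restrict Ω) := by
        rw [setIntegral_congr_set hcover, Measure.restrict_univ]
    _ = ∑ σ, ∫ x in C σ, f x ∂(volume.restrict Ω) :=
        integral_iUnion_fintype hC hdisj fun _ => Integrable.restrict hf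
    _ = (n.factorial : ℝ) • ∫ x in Ω ∩ ascSet n, f x := by
        simp [hchamber, Finset.card_univ, Fintype.card_perm, Nat.cast_smul_eq_nsmul]

end Chambers

theorem stmt_9_general {n : ℕ} (Ω : Set (Fin n → ℝ))
    (hΩsym : ∀ (π : Equiv.Perm (Fin n)) (x : Fin n → ℝ), x ∈ Ω → permAct π x ∈ Ω)
    (g₀ : (Fin n → ℝ) → ℝ)
    (hg₀int : IntegrableOn g₀ Ω volume)
    (hne : ∀ᵐ x ∂(volume.restrict Ω), symmetrize g₀ x ≠ 0)
    (α : ℝ) (φ : (Fin n → ℝ) → ℝ) (hφmeas : Measurable φ)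
    (hφ01 : ∀ x, φ x ∈ Set.Icc (0 : ℝ) 1)
    (hgperm : ∀ᵐ x ∂(volume.restrict Ω),
      (1 / (n.factorial : ℝ)) *
        ∑ π : Equiv.Perm (Fin n), (g₀ (permAct π x) / symmetrize g₀ x) * φ (permAct π x) = α) :
    ∫ x in Ω, g₀ x * φ x
      = α * (n.factorial : ℝ) * ∫ x in Ω ∩ ascSet n, symmetrize g₀ x := by
  have hg₀φ : IntegrableOn (fun x => g₀ x * φ x) Ω :=
    hg₀int.mul_bdd (c := 1) hφmeas.aestronglyMeasurable (ae_of_all _ fun x =>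
      abs_le.2 ⟨by linarith [(hφ01 x).1], (hφ01 x).2⟩)
  have hpointwise : ∀ᵐ x ∂(volume.restrict Ω),
      symmetrize (fun y => g₀ y * φ y) x = α * symmetrize g₀ x := by
    filter_upwards [hne, hgperm] with x hx hφx using symmetrize_mul_eq_mul_symmetrize hx hφx
  calc ∫ x in Ω, g₀ x * φ x = ∫ x in Ω, symmetrize (fun y => g₀ y * φ y) x :=
        (setIntegral_symmetrize hΩsym hg₀φ).symm
    _ = α * ∫ x in Ω, symmetrize g₀ x := by rw [integral_congr_ae hpointwise, integral_const_mul]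
    _ = α * (n.factorial : ℝ) * ∫ x in Ω ∩ ascSet n, symmetrize g₀ x := by
        rw [setIntegral_eq_factorial_smul_setIntegral_inter_ascSet hΩsym
          (integrableOn_symmetrize hΩsym hg₀int) (symmetrize_permAct g₀), smul_eq_mul, mul_assoc]

/-- For a generalized permutation test `φ` at level `α` with respect to `g₀`,
`∫_Ω g₀ φ = α n! ∫_{Ω ∩ T} h`. -/
theorem stmt_9 {n : ℕ} (Ω : Set (Fin n → ℝ)) (hΩmeas : MeasurableSet Ω)
    (hΩsym : ∀ (π : Equiv.Perm (Fin n)) (x : Fin n → ℝ), x ∈ Ω → permAct π x ∈ Ω)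
    (g₀ : (Fin n → ℝ) → ℝ) (hg₀meas : Measurable g₀) (hg₀pos : ∀ x, 0 ≤ g₀ x)
    (hg₀int : IntegrableOn g₀ Ω volume)
    (hne : ∀ᵐ x ∂(volume.restrict Ω), symmetrize g₀ x ≠ 0)
    (α : ℝ) (φ : (Fin n → ℝ) → ℝ) (hφmeas : Measurable φ)
    (hφ01 : ∀ x, φ x ∈ Set.Icc (0 : ℝ) 1)
    (hgperm : ∀ᵐ x ∂(volume.restrict Ω),
      (1 / (n.factorial : ℝ)) *
        ∑ π : Equiv.Perm (Fin n), (g₀ (permAct π x) / symmetrize g₀ x) * φ (permAct π x) = α) :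
    ∫ x in Ω, g₀ x * φ x
      = α * (n.factorial : ℝ) * ∫ x in Ω ∩ ascSet n, symmetrize g₀ x :=
  stmt_9_general Ω hΩsym g₀ hg₀int hne α φ hφmeas hφ01 hgperm
end
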